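/- arXiv:2507.15653 — 3 statements merged into one kernel-verified Lean document; each statement's English description precedes it below -/
import Mathlib

section
/- Let b : ℝ → ℝ be continuous and 2π-periodic (viewed as a continuous real-valued function on the unit circle), and let c ∈ ℝ. Define F(z) := (1/2π)∫₀^{2π} b(t)·(e^{it} + z)/(e^{it} − z) dt + i·c for z in the open unit disk D. Then: (i) F is holomorphic on D; (ii) Im F(0) = c; (iii) for every θ₀ ∈ ℝ, Re F(z) → b(θ₀) as z → e^{iθ₀} within D. Moreover, if G is holomorphic on D with Im G(0) = c and Re G(z) → b(θ₀) as z → e^{iθ₀} within D for every θ₀ ∈ ℝ, then G = F on D. -/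
open Complex Real Metric Filter

/-- The open unit disk in `ℂ`. -/
noncomputable def unitDisk : Set ℂ := Metric.ball (0 : ℂ) 1

/-- The Schwarz integral of a boundary datum `b`, shifted by `i·c`. -/
noncomputable def schwarzIntegral (b : ℝ → ℝ) (c : ℝ) (z : ℂ) : ℂ :=
  (1 / (2 * Real.pi)) * ∫ t in (0 : ℝ)..(2 * Real.pi),
      (b t : ℂ) * ((Complex.exp (Complex.I * t) + z) / (Complex.exp (Complex.I * t) - z))
    + Complex.I * c

/-!
On the unit circle the datum is the function `ζ ↦ b (arg ζ)`, which is continuous because `b` is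
`2π`-periodic. The Schwarz integral is the Herglotz–Riesz average of this function, hence
holomorphic, and its real part is the Poisson integral. The Poisson kernel is nonnegative with
average one and, as `w → ζ₀`, is `O(‖w - ζ₀‖)` away from `ζ₀`; this gives the boundary values.
For uniqueness, the difference `H` of two solutions has real part tending to `0` at the circle.
The maximum modulus principle for `exp (± H)` on slightly smaller disks gives `Re H = 0`, so `H`
is constant by the open mapping theorem, and `Im H 0 = 0` makes it vanish.
-/

open Set Topology

namespace Function.Periodic

variable {b : ℝ → ℝ}

theorem continuousAt_comp_arg (hb : Continuous b) (hp : Periodic b (2 * π)) {ζ : ℂ}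
    (hζ : ζ ≠ 0) : ContinuousAt (fun ζ ↦ b (arg ζ)) ζ :=
  (continuous_quot_lift _ hb : Continuous hp.lift).continuousAt.comp
    (continuousAt_arg_coe_angle hζ)

theorem continuousOn_comp_arg_sphere (hb : Continuous b) (hp : Periodic b (2 * π)) :
    ContinuousOn (fun ζ ↦ b (arg ζ)) (sphere 0 1) := fun ζ hζ ↦
  (hp.continuousAt_comp_arg hb (ne_zero_of_mem_unit_sphere ⟨ζ, hζ⟩)).continuousWithinAt

theorem comp_arg_exp_mul_I (hp : Periodic b (2 * π)) (θ : ℝ) : b (arg (exp (θ * I))) = b θ := by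
  rw [arg_exp_mul_I, toIocMod]
  exact hp.sub_zsmul_eq _

theorem circleIntegrable_ofReal_comp_arg (hb : Continuous b) (hp : Periodic b (2 * π)) :
    CircleIntegrable (fun ζ ↦ (b (arg ζ) : ℂ)) 0 1 :=
  (continuous_ofReal.comp_continuousOn (hp.continuousOn_comp_arg_sphere hb)).circleIntegrable
    zero_le_one

end Function.Periodic

section PoissonKernel

variable {c w ζ ζ₀ : ℂ} {R : ℝ}

theorem poissonKernel_nonneg (h : ‖w - c‖ ≤ ‖ζ - c‖) : 0 ≤ poissonKernel c w ζ := by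
  rw [poissonKernel_def]
  have := pow_le_pow_left₀ (norm_nonneg _) h 2
  positivity

theorem continuousOn_poissonKernel (hw : w ∈ ball c R) :
    ContinuousOn (poissonKernel c w) (sphere c |R|) := by
  rw [poissonKernel_eq_re_herglotzRieszKernel]
  exact continuous_re.comp_continuousOn (continuousOn_herglotzRieszKernel_sphere hw)

theorem circleAverage_poissonKernel (hw : w ∈ ball c R) :
    circleAverage (poissonKernel c w) c R = 1 := by
  simpa [Pi.mul_def] using
    (InnerProductSpace.harmonicOnNhd_const (1 : ℝ)).circleAverage_poissonKernel_smul hw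

theorem poissonKernel_le_of_le_norm_sub (hζ : ζ ∈ sphere c R) (hζ₀ : ζ₀ ∈ sphere c R)
    (hw : w ∈ ball c R) {δ : ℝ} (hδ : 0 < δ) (hζδ : δ ≤ ‖ζ - ζ₀‖) (hwδ : ‖w - ζ₀‖ ≤ δ / 2) :
    poissonKernel c w ζ ≤ 8 * R * ‖w - ζ₀‖ / δ ^ 2 := by
  rw [mem_sphere_iff_norm] at hζ hζ₀
  rw [mem_ball_iff_norm] at hw
  have hnum : R - ‖w - c‖ ≤ ‖w - ζ₀‖ := by
    have := norm_sub_norm_le (ζ₀ - c) (w - c)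
    rw [hζ₀, sub_sub_sub_cancel_right, norm_sub_rev ζ₀ w] at this
    exact this
  have hden : δ / 2 ≤ ‖(ζ - c) - (w - c)‖ := by
    have := norm_sub_norm_le (ζ - ζ₀) (w - ζ₀)
    rw [sub_sub_sub_cancel_right] at this ⊢
    linarith
  rw [poissonKernel_def, hζ]
  calc (R ^ 2 - ‖w - c‖ ^ 2) / ‖(ζ - c) - (w - c)‖ ^ 2
      ≤ 2 * R * ‖w - ζ₀‖ / (δ / 2) ^ 2 := by
        gcongr
        · nlinarith [norm_nonneg (w - c)]
        · nlinarith [norm_nonneg (w - c)]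
    _ = 8 * R * ‖w - ζ₀‖ / δ ^ 2 := by ring

theorem abs_circleAverage_poissonKernel_smul_sub_le {g : ℂ → ℝ} (hg : ContinuousOn g (sphere c R))
    (hζ₀ : ζ₀ ∈ sphere c R) (hw : w ∈ ball c R) {ε M δ : ℝ} (hδ : 0 < δ)
    (hM : ∀ ζ ∈ sphere c R, |g ζ - g ζ₀| ≤ M)
    (hε : ∀ ζ ∈ sphere c R, ‖ζ - ζ₀‖ < δ → |g ζ - g ζ₀| ≤ ε) (hwδ : ‖w - ζ₀‖ ≤ δ / 2) :
    |circleAverage (poissonKernel c w • g) c R - g ζ₀| ≤ ε + M * (8 * R * ‖w - ζ₀‖ / δ ^ 2) := by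
  have hR : |R| = R := abs_of_pos (pos_of_mem_ball hw)
  set P := poissonKernel c w
  set K := 8 * R * ‖w - ζ₀‖ / δ ^ 2
  have hPcont : ContinuousOn P (sphere c |R|) := continuousOn_poissonKernel hw
  have hgcont : ContinuousOn g (sphere c |R|) := by rwa [hR]
  have hP : CircleIntegrable P c R := hPcont.circleIntegrable'
  have hPg : CircleIntegrable (P • g) c R := (hPcont.mul hgcont).circleIntegrable'
  have hdiff : circleAverage (fun ζ ↦ P ζ * (g ζ - g ζ₀)) c R =
      circleAverage (P • g) c R - g ζ₀ := by
    calc circleAverage (fun ζ ↦ P ζ * (g ζ - g ζ₀)) c R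
        = circleAverage (P • g) c R - circleAverage (g ζ₀ • P) c R := by
          rw [← circleAverage_sub hPg hP.const_smul]
          congr 1
          ext ζ
          simp only [Pi.sub_apply, Pi.smul_apply, smul_eq_mul, Pi.mul_apply]
          ring
      _ = circleAverage (P • g) c R - g ζ₀ := by
          rw [circleAverage_smul, circleAverage_poissonKernel hw, smul_eq_mul (g ζ₀), mul_one]
  have hpointwise : ∀ ζ ∈ sphere c |R|, |P ζ * (g ζ - g ζ₀)| ≤ ε * P ζ + M * K := by
    intro ζ hζ
    rw [hR] at hζ
    have hP0 : 0 ≤ P ζ := poissonKernel_nonneg <| by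
      rw [mem_sphere_iff_norm.1 hζ]; exact (mem_ball_iff_norm.1 hw).le
    have hM0 : 0 ≤ M := (abs_nonneg _).trans (hM ζ hζ)
    have hε0 : 0 ≤ ε := by simpa using hε ζ₀ hζ₀ (by simpa using hδ)
    have hK0 : 0 ≤ K := by have := pos_of_mem_ball hw; positivity
    rw [abs_mul, abs_of_nonneg hP0]
    rcases lt_or_ge ‖ζ - ζ₀‖ δ with hnear | hfar
    · nlinarith [hε ζ hζ hnear]
    · nlinarith [hM ζ hζ, poissonKernel_le_of_le_norm_sub hζ hζ₀ hw hδ hfar hwδ,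
        abs_nonneg (g ζ - g ζ₀)]
  calc |circleAverage (P • g) c R - g ζ₀|
      ≤ circleAverage (fun ζ ↦ |P ζ * (g ζ - g ζ₀)|) c R := by
        rw [← hdiff]; exact abs_circleAverage_le_circleAverage_abs
    _ ≤ circleAverage (fun ζ ↦ ε * P ζ + M * K) c R :=
        circleAverage_mono (hPcont.mul (hgcont.sub continuousOn_const)).abs.circleIntegrable'
          ((hP.const_smul (a := ε)).add (circleIntegrable_const _ _ _)) hpointwise
    _ = ε + M * K := by
        change circleAverage (ε • P + fun _ ↦ M * K) c R = _
        rw [circleAverage_add hP.const_smul (circleIntegrable_const _ _ _), circleAverage_smul,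
          circleAverage_poissonKernel hw, circleAverage_const, smul_eq_mul, mul_one]

theorem tendsto_circleAverage_poissonKernel_smul {g : ℂ → ℝ} (hg : ContinuousOn g (sphere c R))
    (hζ₀ : ζ₀ ∈ sphere c R) :
    Tendsto (fun w ↦ circleAverage (poissonKernel c w • g) c R) (𝓝[ball c R] ζ₀) (𝓝 (g ζ₀)) := by
  obtain ⟨M, hM⟩ := (isCompact_sphere c R).exists_bound_of_continuousOn (hg.sub continuousOn_const)
  rw [Metric.tendsto_nhds]
  intro ε hε
  obtain ⟨δ, hδ, hgδ⟩ := Metric.continuousWithinAt_iff.1 (hg ζ₀ hζ₀) (ε / 2) (half_pos hε)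
  have hsmall : Tendsto (fun w ↦ M * (8 * R * ‖w - ζ₀‖ / δ ^ 2)) (𝓝 ζ₀) (𝓝 0) := by
    have : Continuous fun w ↦ M * (8 * R * ‖w - ζ₀‖ / δ ^ 2) := by fun_prop
    simpa using this.tendsto ζ₀
  filter_upwards [self_mem_nhdsWithin,
    nhdsWithin_le_nhds (hsmall.eventually (gt_mem_nhds (half_pos hε))),
    nhdsWithin_le_nhds (closedBall_mem_nhds ζ₀ (half_pos hδ))] with w hw hwM hwδ
  rw [Real.dist_eq]
  calc _ ≤ ε / 2 + M * (8 * R * ‖w - ζ₀‖ / δ ^ 2) :=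
        abs_circleAverage_poissonKernel_smul_sub_le hg hζ₀ hw hδ (fun ζ hζ ↦ hM ζ hζ)
          (fun ζ hζ h ↦ (hgδ hζ (by rwa [dist_eq_norm])).le) (by rwa [← dist_eq_norm])
    _ < ε := by linarith

end PoissonKernel

theorem sphere_subset_thickening_sphere {E : Type*} [NormedAddCommGroup E] [NormedSpace ℝ E]
    (c : E) {r R δ : ℝ} (hr : 0 < r) (hrR : r ≤ R) (hδ : R - r < δ) :
    sphere c r ⊆ thickening δ (sphere c R) := by
  intro w hw
  rw [mem_sphere_iff_norm] at hw
  refine mem_thickening_iff.2 ⟨c + (R / r) • (w - c), ?_, ?_⟩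
  · rw [mem_sphere_iff_norm, add_sub_cancel_left, norm_smul, hw,
      Real.norm_of_nonneg (div_pos (hr.trans_le hrR) hr).le,
      div_mul_cancel₀ _ hr.ne']
  · have : w - (c + (R / r) • (w - c)) = (1 - R / r) • (w - c) := by
      rw [sub_smul, one_smul]; abel
    rw [dist_eq_norm, this, norm_smul, hw, Real.norm_of_nonpos, neg_sub, sub_mul,
      div_mul_cancel₀ _ hr.ne', one_mul]
    · exact hδ
    · rw [sub_nonpos, one_le_div hr]; exact hrR

theorem re_le_zero_of_tendsto_re {H : ℂ → ℂ} {c : ℂ} {R : ℝ}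
    (hH : DifferentiableOn ℂ H (ball c R))
    (hbd : ∀ ζ ∈ sphere c R, Tendsto (fun w ↦ (H w).re) (𝓝[ball c R] ζ) (𝓝 0))
    {z : ℂ} (hz : z ∈ ball c R) : (H z).re ≤ 0 := by
  refine le_of_forall_pos_le_add fun ε hε ↦ ?_
  have hnear : ∀ᶠ w in 𝓝ˢ (sphere c R), w ∈ ball c R → (H w).re < ε :=
    eventually_nhdsSet_iff_forall.2 fun ζ hζ ↦
      eventually_nhdsWithin_iff.1 ((hbd ζ hζ).eventually (gt_mem_nhds hε))
  -- By compactness of the sphere, `Re H < ε` on a whole collar `R - δ < ‖w - c‖ < R`.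
  obtain ⟨δ, hδ, hthick⟩ := (hasBasis_nhdsSet_thickening (isCompact_sphere c R)).mem_iff.1 hnear
  obtain ⟨r, hr, hrR⟩ : ∃ r, max (R - δ) (dist z c) < r ∧ r < R :=
    exists_between (max_lt (by linarith) hz)
  have hr0 : 0 < r := dist_nonneg.trans_lt (le_max_right _ _ |>.trans_lt hr)
  have hδr : R - r < δ := by linarith [le_max_left (R - δ) (dist z c)]
  have hsub : closedBall c r ⊆ ball c R := closedBall_subset_ball hrR
  have hfrontier : ∀ w ∈ frontier (ball c r), ‖exp (H w)‖ ≤ Real.exp ε := by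
    intro w hw
    rw [frontier_ball c hr0.ne'] at hw
    rw [norm_exp, Real.exp_le_exp]
    exact (hthick (sphere_subset_thickening_sphere c hr0 hrR.le hδr hw)
      (hsub (sphere_subset_closedBall hw))).le
  have hdiff : DiffContOnCl ℂ (fun w ↦ exp (H w)) (ball c r) :=
    DifferentiableOn.diffContOnCl <| by
      rw [closure_ball c hr0.ne']
      exact (hH.mono hsub).cexp
  have hz_le := Complex.norm_le_of_forall_mem_frontier_norm_le isBounded_ball hdiff hfrontier
    (subset_closure (mem_ball.2 (le_max_right _ _ |>.trans_lt hr)))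
  rw [norm_exp, Real.exp_le_exp] at hz_le
  linarith

theorem eqOn_zero_of_tendsto_re {H : ℂ → ℂ} {c : ℂ} {R : ℝ}
    (hH : DifferentiableOn ℂ H (ball c R))
    (hbd : ∀ ζ ∈ sphere c R, Tendsto (fun w ↦ (H w).re) (𝓝[ball c R] ζ) (𝓝 0))
    (him : (H c).im = 0) : EqOn H 0 (ball c R) := by
  intro z hz
  have hR : 0 < R := pos_of_mem_ball hz
  have hre : ∀ w ∈ ball c R, (H w).re = 0 := fun w hw ↦
    le_antisymm (re_le_zero_of_tendsto_re hH hbd hw) <| by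
      simpa using re_le_zero_of_tendsto_re hH.neg (fun ζ hζ ↦ by simpa using (hbd ζ hζ).neg) hw
  obtain ⟨a, ha⟩ := (hH.analyticOnNhd isOpen_ball).eq_const_of_re_eq_const hre isOpen_ball
    (isConnected_ball hR)
  have hc : c ∈ ball c R := mem_ball_self hR
  rw [ha z hz, ← ha c hc]
  exact Complex.ext (hre c hc) him

section SchwarzIntegral

variable {b : ℝ → ℝ}

theorem schwarzIntegral_eq_circleAverage (hb : Continuous b) (hp : Function.Periodic b (2 * π))
    (c : ℝ) {z : ℂ} (hz : z ∈ unitDisk) :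
    schwarzIntegral b c z =
      circleAverage (fun ζ ↦ herglotzRieszKernel 0 z ζ • (b (arg ζ) : ℂ)) 0 1 + I * c := by
  have hint : CircleIntegrable (fun ζ ↦ herglotzRieszKernel 0 z ζ • (b (arg ζ) : ℂ)) 0 1 :=
    (hp.circleIntegrable_ofReal_comp_arg hb).continuousOn_smul
      (continuousOn_herglotzRieszKernel_sphere hz)
  have hkernel : ∀ t : ℝ, (b t : ℂ) * ((exp (I * t) + z) / (exp (I * t) - z)) =
      herglotzRieszKernel 0 z (circleMap 0 1 t) • (b (arg (circleMap 0 1 t)) : ℂ) := fun t ↦ by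
    simp [circleMap, herglotzRieszKernel, hp.comp_arg_exp_mul_I, mul_comm I, mul_comm (b t : ℂ)]
  simp_rw [schwarzIntegral, hkernel]
  rw [intervalIntegral.integral_add hint intervalIntegrable_const, intervalIntegral.integral_const,
    sub_zero, circleAverage_def, Complex.real_smul, Complex.real_smul]
  push_cast
  field_simp

theorem im_schwarzIntegral_zero (hb : Continuous b) (c : ℝ) : (schwarzIntegral b c 0).im = c := by
  have hint : IntervalIntegrable (fun t ↦ (b t : ℂ)) MeasureTheory.volume 0 (2 * π) :=
    (continuous_ofReal.comp hb).intervalIntegrable _ _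
  have h2π : (1 / (2 * π) : ℂ) * ((2 * π : ℝ) : ℂ) = 1 := by
    push_cast
    field_simp
  simp only [schwarzIntegral, add_zero, sub_zero, div_self (Complex.exp_ne_zero _), mul_one]
  rw [intervalIntegral.integral_add hint intervalIntegrable_const, intervalIntegral.integral_ofReal,
    intervalIntegral.integral_const, sub_zero, real_smul, mul_add, ← mul_assoc, h2π, one_mul]
  simp

theorem differentiableOn_schwarzIntegral (hb : Continuous b) (hp : Function.Periodic b (2 * π))
    (c : ℝ) : DifferentiableOn ℂ (schwarzIntegral b c) unitDisk :=
  ((differentiableOn_circleAverage_herglotzRieszKernel_smul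
    (hp.circleIntegrable_ofReal_comp_arg hb)).add_const _).congr
    fun _ hz ↦ schwarzIntegral_eq_circleAverage hb hp c hz

theorem re_schwarzIntegral (hb : Continuous b) (hp : Function.Periodic b (2 * π)) (c : ℝ)
    {z : ℂ} (hz : z ∈ unitDisk) :
    (schwarzIntegral b c z).re = circleAverage (poissonKernel 0 z • fun ζ ↦ b (arg ζ)) 0 1 := by
  rw [schwarzIntegral_eq_circleAverage hb hp c hz, poissonKernel_eq_re_herglotzRieszKernel]
  simpa using re_circleAverage_herglotzRieszKernel_smul
    ((hp.continuousOn_comp_arg_sphere hb).circleIntegrable zero_le_one) hz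

theorem tendsto_re_schwarzIntegral (hb : Continuous b) (hp : Function.Periodic b (2 * π))
    (c θ₀ : ℝ) :
    Tendsto (fun z ↦ (schwarzIntegral b c z).re) (𝓝[unitDisk] (exp (I * θ₀))) (𝓝 (b θ₀)) := by
  have hθ₀ : exp (θ₀ * I) ∈ sphere (0 : ℂ) 1 := by simp
  rw [mul_comm I, ← hp.comp_arg_exp_mul_I θ₀]
  exact (tendsto_circleAverage_poissonKernel_smul (hp.continuousOn_comp_arg_sphere hb) hθ₀).congr'
    (eventually_nhdsWithin_of_forall fun z hz ↦ (re_schwarzIntegral hb hp c hz).symm)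

end SchwarzIntegral

/-- The Schwarz boundary value problem for holomorphic functions on the unit disk with
continuous boundary datum: existence, boundary behavior, normalization, and uniqueness. -/
theorem schwarz_bvp_holomorphic (b : ℝ → ℝ) (hb : Continuous b)
    (hbper : Function.Periodic b (2 * Real.pi)) (c : ℝ) :
    (∀ z ∈ unitDisk, DifferentiableAt ℂ (schwarzIntegral b c) z) ∧
      (schwarzIntegral b c 0).im = c ∧
      (∀ θ₀ : ℝ, Tendsto (fun z => (schwarzIntegral b c z).re)
        (nhdsWithin (Complex.exp (Complex.I * θ₀)) unitDisk) (nhds (b θ₀))) ∧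
      (∀ G : ℂ → ℂ, (∀ z ∈ unitDisk, DifferentiableAt ℂ G z) → (G 0).im = c →
        (∀ θ₀ : ℝ, Tendsto (fun z => (G z).re)
          (nhdsWithin (Complex.exp (Complex.I * θ₀)) unitDisk) (nhds (b θ₀))) →
        ∀ z ∈ unitDisk, G z = schwarzIntegral b c z) := by
  have hF := differentiableOn_schwarzIntegral hb hbper c
  have hFbd := tendsto_re_schwarzIntegral hb hbper c
  refine ⟨fun z hz ↦ hF.differentiableAt (isOpen_ball.mem_nhds hz), im_schwarzIntegral_zero hb c,
    hFbd, fun G hG hGim hGbd z hz ↦ sub_eq_zero.1 ?_⟩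
  have hG' : DifferentiableOn ℂ G unitDisk := fun w hw ↦ (hG w hw).differentiableWithinAt
  refine eqOn_zero_of_tendsto_re (H := G - schwarzIntegral b c) (hG'.sub hF) (fun ζ hζ ↦ ?_) ?_ hz
  · obtain ⟨θ, rfl⟩ := (norm_eq_one_iff ζ).1 (by simpa using hζ)
    rw [mul_comm]
    simpa [unitDisk] using (hGbd θ).sub (hFbd θ)
  · simp [hGim, im_schwarzIntegral_zero hb c]
end

section
/- Uniqueness for the Schwarz problem with distributional boundary condition (complex component). Let w : D → ℂ be holomorphic on the open unit disk D with Im w(0) = 0, and suppose that for every 2π-periodic C^∞ function γ : ℝ → ℝ, lim_{r→1⁻} ∫₀^{2π} Re(w(re^{iθ}))·γ(θ) dθ = 0. Then w is identically zero on D. -/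
open Complex Real Metric Filter intervalIntegral

namespace SchwarzAux

variable {w : ℂ → ℂ}

lemma contOn (hw : ∀ z ∈ Metric.ball (0:ℂ) 1, DifferentiableAt ℂ w z) :
    ContinuousOn w (Metric.ball (0:ℂ) 1) :=
  fun z hz => (hw z hz).continuousAt.continuousWithinAt

lemma circleMap_mem {s : ℝ} (hs0 : 0 ≤ s) (hs1 : s < 1) (θ : ℝ) :
    circleMap 0 s θ ∈ Metric.ball (0:ℂ) 1 := by
  simp [norm_circleMap_zero, _root_.abs_of_nonneg hs0, hs1]

lemma cont_circle (hw : ∀ z ∈ Metric.ball (0:ℂ) 1, DifferentiableAt ℂ w z)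
    {s : ℝ} (hs0 : 0 ≤ s) (hs1 : s < 1) :
    Continuous fun θ : ℝ => w (circleMap 0 s θ) := by
  refine continuous_iff_continuousAt.2 fun θ => ?_
  exact ((hw _ (circleMap_mem hs0 hs1 θ)).continuousAt).comp
    (continuous_circleMap 0 s).continuousAt

lemma hasSeries (hw : ∀ z ∈ Metric.ball (0:ℂ) 1, DifferentiableAt ℂ w z)
    {s : ℝ} (hs0 : 0 < s) (hs1 : s < 1) :
    HasFPowerSeriesOnBall w (cauchyPowerSeries w 0 s) 0 (s.toNNReal : ENNReal) := by
  have hsub : Metric.closedBall (0:ℂ) s ⊆ Metric.ball (0:ℂ) 1 :=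
    Metric.closedBall_subset_ball hs1
  have hd : DifferentiableOn ℂ w (Metric.closedBall (0:ℂ) (s.toNNReal : ℝ)) := by
    rw [Real.coe_toNNReal s hs0.le]
    exact fun z hz => (hw z (hsub hz)).differentiableWithinAt
  have := hd.hasFPowerSeriesOnBall (R := s.toNNReal)
    (by simpa using Real.toNNReal_pos.2 hs0)
  rwa [Real.coe_toNNReal s hs0.le] at this

lemma series_eq (hw : ∀ z ∈ Metric.ball (0:ℂ) 1, DifferentiableAt ℂ w z)
    {s : ℝ} (hs0 : 0 < s) (hs1 : s < 1) :
    cauchyPowerSeries w 0 s = cauchyPowerSeries w 0 (1/2) :=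
  (hasSeries hw hs0 hs1).hasFPowerSeriesAt.eq_formalMultilinearSeries
    ((hasSeries hw (by norm_num) (by norm_num)).hasFPowerSeriesAt)

lemma integral_J (hw : ∀ z ∈ Metric.ball (0:ℂ) 1, DifferentiableAt ℂ w z)
    (n : ℕ) {s : ℝ} (hs0 : 0 < s) (hs1 : s < 1) :
    (∫ θ in (0:ℝ)..(2*π), w (circleMap 0 s θ) * Complex.exp (-(n:ℂ) * θ * Complex.I))
      = 2 * π * s^n * (cauchyPowerSeries w 0 (1/2)).coeff n := by
  have hsC : (s:ℂ) ≠ 0 := Complex.ofReal_ne_zero.2 hs0.ne'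
  have h1 := cauchyPowerSeries_apply w 0 s n 1
  have h2 : (∮ z in C(0, s), ((1:ℂ) / (z - 0)) ^ n • (z - 0)⁻¹ • w z)
      = (Complex.I * ((s:ℂ)^n)⁻¹) *
        ∫ θ in (0:ℝ)..(2*π), w (circleMap 0 s θ) * Complex.exp (-(n:ℂ) * θ * Complex.I) := by
    rw [← intervalIntegral.integral_const_mul]
    simp only [circleIntegral]
    apply intervalIntegral.integral_congr
    intro θ _
    have hE : Complex.exp (↑θ * Complex.I) ≠ 0 := Complex.exp_ne_zero _
    have hEn : Complex.exp (-(n:ℂ) * θ * Complex.I) = ((Complex.exp (↑θ * Complex.I)) ^ n)⁻¹ := by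
      rw [← Complex.exp_nat_mul, ← Complex.exp_neg]
      ring_nf
    simp only [deriv_circleMap, circleMap_zero, smul_eq_mul, sub_zero, hEn]
    field_simp
    rw [one_div, inv_pow, mul_assoc _ ((s:ℂ)^n), ← mul_pow, mul_comm _ (w _), mul_assoc,
      inv_mul_cancel₀ (pow_ne_zero _ (mul_ne_zero hsC hE)), mul_one]
  rw [h2] at h1
  have h1' : (cauchyPowerSeries w 0 s).coeff n = (2 * ↑π * Complex.I : ℂ)⁻¹ •
      ((Complex.I * ((s:ℂ)^n)⁻¹) *
        ∫ θ in (0:ℝ)..(2*π), w (circleMap 0 s θ) * Complex.exp (-(n:ℂ) * θ * Complex.I)) := h1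
  rw [series_eq hw hs0 hs1] at h1'
  rw [h1']
  have hπ : (π:ℂ) ≠ 0 := Complex.ofReal_ne_zero.2 Real.pi_ne_zero
  have hsn : ((s:ℂ)^n) ≠ 0 := pow_ne_zero _ hsC
  generalize (∫ θ in (0:ℝ)..(2*π), w (circleMap 0 s θ) * Complex.exp (-(n:ℂ) * θ * Complex.I)) = J
  field_simp
  rw [smul_eq_mul]
  field_simp

lemma integral_K (hw : ∀ z ∈ Metric.ball (0:ℂ) 1, DifferentiableAt ℂ w z)
    {n : ℕ} (hn : 1 ≤ n) {s : ℝ} (hs0 : 0 < s) (hs1 : s < 1) :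
    (∫ θ in (0:ℝ)..(2*π), w (circleMap 0 s θ) * Complex.exp ((n:ℂ) * θ * Complex.I)) = 0 := by
  have hsC : (s:ℂ) ≠ 0 := Complex.ofReal_ne_zero.2 hs0.ne'
  have hsub : Metric.closedBall (0:ℂ) s ⊆ Metric.ball (0:ℂ) 1 :=
    Metric.closedBall_subset_ball hs1
  have h0 : (∮ z in C(0, s), z ^ (n-1) * w z) = 0 := by
    refine circleIntegral_eq_zero_of_differentiable_on_off_countable hs0.le
      Set.countable_empty ?_ ?_
    · exact (continuous_pow _).continuousOn.mul ((contOn hw).mono hsub)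
    · intro z hz
      exact ((differentiableAt_pow _).mul (hw z (Metric.ball_subset_ball hs1.le hz.1)))
  have h2 : (∮ z in C(0, s), z ^ (n-1) * w z)
      = (Complex.I * (s:ℂ)^n) *
        ∫ θ in (0:ℝ)..(2*π), w (circleMap 0 s θ) * Complex.exp ((n:ℂ) * θ * Complex.I) := by
    rw [← intervalIntegral.integral_const_mul]
    simp only [circleIntegral]
    apply intervalIntegral.integral_congr
    intro θ _
    have hzn : (circleMap 0 s θ) * (circleMap 0 s θ) ^ (n-1) = (circleMap 0 s θ) ^ n := by
      rw [← pow_succ', Nat.sub_add_cancel hn]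
    have hEn : Complex.exp ((n:ℂ) * θ * Complex.I) = (Complex.exp (↑θ * Complex.I)) ^ n := by
      rw [← Complex.exp_nat_mul]; ring_nf
    simp only [deriv_circleMap, smul_eq_mul, hEn]
    rw [show circleMap 0 s θ * Complex.I * (circleMap 0 s θ ^ (n-1) * w (circleMap 0 s θ))
        = Complex.I * ((circleMap 0 s θ) * (circleMap 0 s θ) ^ (n-1) * w (circleMap 0 s θ)) by ring,
      hzn, circleMap_zero, mul_pow]
    ring
  rw [h2] at h0
  have : (Complex.I * (s:ℂ)^n) ≠ 0 :=
    mul_ne_zero Complex.I_ne_zero (pow_ne_zero _ hsC)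
  exact (mul_eq_zero.1 h0).resolve_left this

lemma complex_integral_cos (hw : ∀ z ∈ Metric.ball (0:ℂ) 1, DifferentiableAt ℂ w z)
    {n : ℕ} (hn : 1 ≤ n) {s : ℝ} (hs0 : 0 < s) (hs1 : s < 1) :
    (∫ θ in (0:ℝ)..(2*π), w (circleMap 0 s θ) * ((Real.cos (n*θ) : ℝ) : ℂ))
      = ↑π * (s:ℂ)^n * (cauchyPowerSeries w 0 (1/2)).coeff n := by
  have hwc := cont_circle hw hs0.le hs1
  have hint1 : IntervalIntegrable
      (fun θ : ℝ => w (circleMap 0 s θ) * Complex.exp ((n:ℂ)*θ*Complex.I))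
      MeasureTheory.volume 0 (2*π) := by
    apply Continuous.intervalIntegrable
    exact hwc.mul (by continuity)
  have hint2 : IntervalIntegrable
      (fun θ : ℝ => w (circleMap 0 s θ) * Complex.exp (-(n:ℂ)*θ*Complex.I))
      MeasureTheory.volume 0 (2*π) := by
    apply Continuous.intervalIntegrable
    exact hwc.mul (by continuity)
  have hpt : ∀ θ:ℝ, w (circleMap 0 s θ) * ((Real.cos (n*θ):ℝ):ℂ)
      = (w (circleMap 0 s θ) * Complex.exp ((n:ℂ)*θ*Complex.I)
         + w (circleMap 0 s θ) * Complex.exp (-(n:ℂ)*θ*Complex.I)) / 2 := by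
    intro θ
    have h2c := Complex.two_cos (x := ((n*θ:ℝ):ℂ))
    have e1 : ((n*θ:ℝ):ℂ) * Complex.I = (n:ℂ)*θ*Complex.I := by push_cast; ring
    have e2 : -((n*θ:ℝ):ℂ) * Complex.I = -(n:ℂ)*θ*Complex.I := by push_cast; ring
    rw [e1, e2] at h2c
    rw [Complex.ofReal_cos]
    linear_combination (w (circleMap 0 s θ) / 2) * h2c
  rw [intervalIntegral.integral_congr (fun θ _ => hpt θ)]
  rw [intervalIntegral.integral_div, intervalIntegral.integral_add hint1 hint2,
    integral_K hw hn hs0 hs1, integral_J hw n hs0 hs1]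
  ring

lemma complex_integral_sin (hw : ∀ z ∈ Metric.ball (0:ℂ) 1, DifferentiableAt ℂ w z)
    {n : ℕ} (hn : 1 ≤ n) {s : ℝ} (hs0 : 0 < s) (hs1 : s < 1) :
    (∫ θ in (0:ℝ)..(2*π), w (circleMap 0 s θ) * ((Real.sin (n*θ) : ℝ) : ℂ))
      = ↑π * (s:ℂ)^n * (cauchyPowerSeries w 0 (1/2)).coeff n * Complex.I := by
  have hwc := cont_circle hw hs0.le hs1
  have hint1 : IntervalIntegrable
      (fun θ : ℝ => w (circleMap 0 s θ) * Complex.exp (-(n:ℂ)*θ*Complex.I) * Complex.I)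
      MeasureTheory.volume 0 (2*π) := by
    apply Continuous.intervalIntegrable
    exact (hwc.mul (by continuity)).mul continuous_const
  have hint2 : IntervalIntegrable
      (fun θ : ℝ => w (circleMap 0 s θ) * Complex.exp ((n:ℂ)*θ*Complex.I) * Complex.I)
      MeasureTheory.volume 0 (2*π) := by
    apply Continuous.intervalIntegrable
    exact (hwc.mul (by continuity)).mul continuous_const
  have hpt : ∀ θ:ℝ, w (circleMap 0 s θ) * ((Real.sin (n*θ):ℝ):ℂ)
      = (w (circleMap 0 s θ) * Complex.exp (-(n:ℂ)*θ*Complex.I) * Complex.I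
         - w (circleMap 0 s θ) * Complex.exp ((n:ℂ)*θ*Complex.I) * Complex.I) / 2 := by
    intro θ
    have h2s := Complex.two_sin (x := ((n*θ:ℝ):ℂ))
    have e1 : ((n*θ:ℝ):ℂ) * Complex.I = (n:ℂ)*θ*Complex.I := by push_cast; ring
    have e2 : -((n*θ:ℝ):ℂ) * Complex.I = -(n:ℂ)*θ*Complex.I := by push_cast; ring
    rw [e1, e2] at h2s
    rw [Complex.ofReal_sin]
    linear_combination (w (circleMap 0 s θ) / 2) * h2s
  rw [intervalIntegral.integral_congr (fun θ _ => hpt θ)]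
  rw [intervalIntegral.integral_div, intervalIntegral.integral_sub hint1 hint2,
    intervalIntegral.integral_mul_const, intervalIntegral.integral_mul_const,
    integral_K hw hn hs0 hs1, integral_J hw n hs0 hs1]
  ring

lemma re_integral_cos (hw : ∀ z ∈ Metric.ball (0:ℂ) 1, DifferentiableAt ℂ w z)
    {n : ℕ} (hn : 1 ≤ n) {s : ℝ} (hs0 : 0 < s) (hs1 : s < 1) :
    (∫ θ in (0:ℝ)..(2*π), (w ((s:ℂ) * Complex.exp (Complex.I * θ))).re * Real.cos (n*θ))
      = π * s^n * ((cauchyPowerSeries w 0 (1/2)).coeff n).re := by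
  have hwc := cont_circle hw hs0.le hs1
  have hg : IntervalIntegrable (fun θ : ℝ => w (circleMap 0 s θ) * ((Real.cos (n*θ):ℝ):ℂ))
      MeasureTheory.volume 0 (2*π) := by
    apply Continuous.intervalIntegrable
    exact hwc.mul (by continuity)
  have hpt : ∀ θ:ℝ, (w ((s:ℂ) * Complex.exp (Complex.I * θ))).re * Real.cos (n*θ)
      = Complex.reCLM (w (circleMap 0 s θ) * ((Real.cos (n*θ):ℝ):ℂ)) := by
    intro θ
    rw [circleMap_zero, mul_comm ((θ:ℂ)) Complex.I]
    simp [Complex.mul_re, -Complex.ofReal_cos]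
  rw [intervalIntegral.integral_congr (fun θ _ => hpt θ),
    ContinuousLinearMap.intervalIntegral_comp_comm _ hg,
    complex_integral_cos hw hn hs0 hs1,
    show (↑π * (s:ℂ)^n : ℂ) = ((π * s^n : ℝ) : ℂ) by push_cast; ring]
  simp only [Complex.reCLM_apply]
  rw [Complex.re_ofReal_mul]

lemma re_integral_sin (hw : ∀ z ∈ Metric.ball (0:ℂ) 1, DifferentiableAt ℂ w z)
    {n : ℕ} (hn : 1 ≤ n) {s : ℝ} (hs0 : 0 < s) (hs1 : s < 1) :
    (∫ θ in (0:ℝ)..(2*π), (w ((s:ℂ) * Complex.exp (Complex.I * θ))).re * Real.sin (n*θ))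
      = -(π * s^n * ((cauchyPowerSeries w 0 (1/2)).coeff n).im) := by
  have hwc := cont_circle hw hs0.le hs1
  have hg : IntervalIntegrable (fun θ : ℝ => w (circleMap 0 s θ) * ((Real.sin (n*θ):ℝ):ℂ))
      MeasureTheory.volume 0 (2*π) := by
    apply Continuous.intervalIntegrable
    exact hwc.mul (by continuity)
  have hpt : ∀ θ:ℝ, (w ((s:ℂ) * Complex.exp (Complex.I * θ))).re * Real.sin (n*θ)
      = Complex.reCLM (w (circleMap 0 s θ) * ((Real.sin (n*θ):ℝ):ℂ)) := by
    intro θ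
    rw [circleMap_zero, mul_comm ((θ:ℂ)) Complex.I]
    simp [Complex.mul_re, -Complex.ofReal_sin]
  rw [intervalIntegral.integral_congr (fun θ _ => hpt θ),
    ContinuousLinearMap.intervalIntegral_comp_comm _ hg,
    complex_integral_sin hw hn hs0 hs1,
    show (↑π * (s:ℂ)^n : ℂ) = ((π * s^n : ℝ) : ℂ) by push_cast; ring,
    mul_assoc]
  simp only [Complex.reCLM_apply]
  rw [Complex.re_ofReal_mul, Complex.mul_I_re]
  ring

lemma re_integral_one (hw : ∀ z ∈ Metric.ball (0:ℂ) 1, DifferentiableAt ℂ w z)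
    {s : ℝ} (hs0 : 0 < s) (hs1 : s < 1) :
    (∫ θ in (0:ℝ)..(2*π), (w ((s:ℂ) * Complex.exp (Complex.I * θ))).re * 1)
      = 2 * π * ((cauchyPowerSeries w 0 (1/2)).coeff 0).re := by
  have hwc := cont_circle hw hs0.le hs1
  have hg : IntervalIntegrable (fun θ : ℝ => w (circleMap 0 s θ))
      MeasureTheory.volume 0 (2*π) := hwc.intervalIntegrable _ _
  have hpt : ∀ θ:ℝ, (w ((s:ℂ) * Complex.exp (Complex.I * θ))).re * 1
      = Complex.reCLM (w (circleMap 0 s θ)) := by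
    intro θ
    rw [circleMap_zero, mul_comm ((θ:ℂ)) Complex.I]
    simp
  have hJ := integral_J hw 0 hs0 hs1
  simp only [Nat.cast_zero, neg_zero, zero_mul, Complex.exp_zero, mul_one, pow_zero] at hJ
  rw [intervalIntegral.integral_congr (fun θ _ => hpt θ),
    ContinuousLinearMap.intervalIntegral_comp_comm _ hg, hJ]
  simp [Complex.mul_re, Complex.ofReal_re, Complex.ofReal_im]

end SchwarzAux

open SchwarzAux

/-- Uniqueness for the Schwarz problem with distributional boundary condition: a holomorphic
function on the unit disk whose imaginary part vanishes at the origin and whose real part has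
distributional boundary value `0` is identically zero. -/
theorem schwarz_bvp_distributional_uniqueness (w : ℂ → ℂ)
    (hw : ∀ z ∈ unitDisk, DifferentiableAt ℂ w z)
    (hw0 : (w 0).im = 0)
    (hbv : ∀ γ : ℝ → ℝ, ContDiff ℝ (⊤ : ℕ∞) γ → Function.Periodic γ (2 * Real.pi) →
      Tendsto (fun r : ℝ => ∫ θ in (0 : ℝ)..(2 * Real.pi),
          (w (r * Complex.exp (Complex.I * θ))).re * γ θ)
        (nhdsWithin (1 : ℝ) (Set.Iio 1)) (nhds 0)) :
    ∀ z ∈ unitDisk, w z = 0 := by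
  have hw' : ∀ z ∈ Metric.ball (0:ℂ) 1, DifferentiableAt ℂ w z := hw
  have hIoo : Set.Ioo (0:ℝ) 1 ∈ nhdsWithin (1:ℝ) (Set.Iio 1) :=
    Ioo_mem_nhdsLT_of_mem (by constructor <;> norm_num)
  -- the limit extraction principle
  have hlim : ∀ (n : ℕ) (γ : ℝ → ℝ), ContDiff ℝ (⊤ : ℕ∞) γ → Function.Periodic γ (2 * Real.pi) →
      ∀ c : ℝ, (∀ s : ℝ, 0 < s → s < 1 →
        (∫ θ in (0:ℝ)..(2*π), (w ((s:ℂ) * Complex.exp (Complex.I * θ))).re * γ θ)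
          = π * s^n * c) → c = 0 := by
    intro n γ hsm hper c hc
    have h1 := hbv γ hsm hper
    have h2 : Tendsto (fun s : ℝ => π * s^n * c) (nhdsWithin (1:ℝ) (Set.Iio 1))
        (nhds (π * 1^n * c)) :=
      ((continuous_const.mul (continuous_pow n)).mul continuous_const).tendsto (1:ℝ)
        |>.mono_left nhdsWithin_le_nhds
    have heq : (fun r : ℝ => ∫ θ in (0 : ℝ)..(2 * Real.pi),
          (w (r * Complex.exp (Complex.I * θ))).re * γ θ)
        =ᶠ[nhdsWithin (1:ℝ) (Set.Iio 1)] fun s => π * s^n * c := by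
      filter_upwards [hIoo] with r hr
      exact hc r hr.1 hr.2
    have h3 := (h1.congr' heq)
    have h4 : π * 1^n * c = 0 := (tendsto_nhds_unique h3 h2).symm
    have h5 : π * c = 0 := by simpa using h4
    rcases mul_eq_zero.1 h5 with h | h
    · exact absurd h Real.pi_ne_zero
    · exact h
  set p := cauchyPowerSeries w 0 (1/2) with hp
  have key : ∀ n : ℕ, p.coeff n = 0 := by
    intro n
    rcases Nat.eq_zero_or_pos n with rfl | hn
    · have hre : (p.coeff 0).re = 0 := by
        have := hlim 0 (fun _ => 1) contDiff_const (fun _ => rfl) (2 * (p.coeff 0).re)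
          (fun s hs0 hs1 => by rw [re_integral_one hw' hs0 hs1]; ring)
        linarith
      have him : (p.coeff 0).im = 0 := by
        have h0 : p.coeff 0 = w 0 :=
          (hasSeries hw' (by norm_num) (by norm_num)).coeff_zero 1
        rw [h0]; exact hw0
      exact Complex.ext hre him
    · have hsmc : ContDiff ℝ (⊤ : ℕ∞) (fun θ : ℝ => Real.cos (n*θ)) :=
        Real.contDiff_cos.comp ((contDiff_const.mul contDiff_id))
      have hsms : ContDiff ℝ (⊤ : ℕ∞) (fun θ : ℝ => Real.sin (n*θ)) :=
        Real.contDiff_sin.comp ((contDiff_const.mul contDiff_id))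
      have hperc : Function.Periodic (fun θ : ℝ => Real.cos (n*θ)) (2 * Real.pi) := by
        intro θ
        simp only [mul_add]
        exact (Real.cos_periodic.nat_mul n) ((n:ℝ)*θ)
      have hpers : Function.Periodic (fun θ : ℝ => Real.sin (n*θ)) (2 * Real.pi) := by
        intro θ
        simp only [mul_add]
        exact (Real.sin_periodic.nat_mul n) ((n:ℝ)*θ)
      have hre : (p.coeff n).re = 0 :=
        hlim n _ hsmc hperc ((p.coeff n).re)
          (fun s hs0 hs1 => by rw [re_integral_cos hw' hn hs0 hs1])
      have him : -(p.coeff n).im = 0 :=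
        hlim n _ hsms hpers (-(p.coeff n).im)
          (fun s hs0 hs1 => by rw [re_integral_sin hw' hn hs0 hs1]; ring)
      exact Complex.ext hre (neg_eq_zero.1 him)
  intro z hz
  have hz1 : ‖z‖ < 1 := by
    simpa [unitDisk, Complex.dist_eq] using hz
  set r := (‖z‖ + 1)/2 with hrdef
  have hr0 : 0 < r := by positivity
  have hr1 : r < 1 := by rw [hrdef]; linarith
  have hzr : ‖z‖ < r := by rw [hrdef]; linarith
  have h := hasSeries hw' hr0 hr1
  have hmem : z ∈ Metric.eball (0:ℂ) (r.toNNReal : ENNReal) := by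
    rw [mem_emetric_ball_zero_iff]
    have hlt : ‖z‖₊ < r.toNNReal := by
      rw [← norm_toNNReal]
      exact (Real.toNNReal_lt_toNNReal_iff hr0).2
        (by simpa using hzr)
    exact_mod_cast hlt
  have hsum := h.hasSum hmem
  have hterm : ∀ m : ℕ, (cauchyPowerSeries w 0 r m fun _ => z) = (0:ℂ) := by
    intro m
    rw [FormalMultilinearSeries.apply_eq_pow_smul_coeff, series_eq hw' hr0 hr1, ← hp,
      key m, smul_zero]
  simp only [hterm] at hsum
  have h0 : (0:ℂ) = w (0 + z) := hasSum_zero.unique hsum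
  rw [zero_add] at h0
  exact h0.symm
end

section
/- Uniqueness for the bicomplex Schwarz problem with distributional boundary condition (Theorem 3.3, homogeneous form). Let w⁺, w⁻ : D → ℂ be functions on the open unit disk such that conj∘w⁺ and w⁻ are holomorphic on D, Im w⁺(0) = 0 and Im w⁻(0) = 0, and for every 2π-periodic C^∞ function γ : ℝ → ℝ, lim_{r→1⁻} ∫₀^{2π} Re(w⁺(re^{iθ}))·γ(θ) dθ = 0 and lim_{r→1⁻} ∫₀^{2π} Re(w⁻(re^{iθ}))·γ(θ) dθ = 0. Then w⁺ and w⁻ are identically zero on D; equivalently, the bicomplex function w = p⁺w⁺ + p⁻w⁻ is identically zero. -/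
open Complex Real Metric Filter Set intervalIntegral

lemma my_intervalIntegral_conj {a b : ℝ} (f : ℝ → ℂ) :
    (∫ x in a..b, (starRingEnd ℂ) (f x)) = (starRingEnd ℂ) (∫ x in a..b, f x) := by
  simp only [intervalIntegral, integral_conj, ← map_sub]

lemma cauchy_param {R : ℝ} (hR : 1 < R) {g : ℂ → ℂ}
    (hg : DifferentiableOn ℂ g (ball 0 R)) {z : ℂ} (hz : z ∈ ball (0:ℂ) 1) :
    (∫ θ in (0:ℝ)..(2*π),
        circleMap 0 1 θ / (circleMap 0 1 θ - z) * g (circleMap 0 1 θ))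
      = 2 * π * g z := by
  have hd : DiffContOnCl ℂ g (ball 0 1) := by
    apply DifferentiableOn.diffContOnCl
    refine hg.mono ?_
    rw [closure_ball (0:ℂ) one_ne_zero]
    exact closedBall_subset_ball hR
  have hc := hd.circleIntegral_sub_inv_smul hz
  simp only [circleIntegral, deriv_circleMap, smul_eq_mul] at hc
  have h2 : (∫ θ in (0:ℝ)..(2*π),
      I * (circleMap 0 1 θ / (circleMap 0 1 θ - z) * g (circleMap 0 1 θ)))
      = 2 * ↑π * I * g z := by
    rw [← hc]
    congr 1
    funext θ
    simp only [div_eq_mul_inv]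
    ring
  rw [integral_const_mul] at h2
  apply mul_left_cancel₀ I_ne_zero
  rw [h2]; ring

lemma mean_value {R : ℝ} (hR : 1 < R) {g : ℂ → ℂ}
    (hg : DifferentiableOn ℂ g (ball 0 R)) :
    (∫ θ in (0:ℝ)..(2*π), g (circleMap 0 1 θ)) = 2 * π * g 0 := by
  have h := cauchy_param hR hg (mem_ball_self one_pos)
  rw [← h]
  apply intervalIntegral.integral_congr
  intro θ _
  simp only [sub_zero, div_self (circleMap_ne_center one_ne_zero), one_mul]

lemma my_conj_circleMap (θ : ℝ) :
    (starRingEnd ℂ) (circleMap 0 1 θ) = (circleMap 0 1 θ)⁻¹ := by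
  have h1 : circleMap 0 1 θ ≠ 0 := circleMap_ne_center one_ne_zero
  have h2 : circleMap 0 1 θ * (starRingEnd ℂ) (circleMap 0 1 θ) = 1 := by
    rw [Complex.mul_conj]
    norm_cast
    rw [Complex.normSq_eq_norm_sq, norm_circleMap_zero]
    norm_num
  field_simp
  linear_combination h2

lemma conj_kernel {R : ℝ} (hR : 1 < R) {g : ℂ → ℂ}
    (hg : DifferentiableOn ℂ g (ball 0 R)) {z : ℂ} (hz : z ∈ ball (0:ℂ) 1) :
    (∫ θ in (0:ℝ)..(2*π),
        (starRingEnd ℂ) (g (circleMap 0 1 θ)) * (circleMap 0 1 θ / (circleMap 0 1 θ - z)))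
      = 2 * π * (starRingEnd ℂ) (g 0) := by
  set h : ℂ → ℂ := fun w => g w * (1 - (starRingEnd ℂ) z * w)⁻¹ with hh
  have habs : ‖z‖ < 1 := by simpa [Metric.mem_ball] using hz
  have ha0 : (0:ℝ) ≤ ‖z‖ := norm_nonneg z
  set R' : ℝ := min R (1 + (1 - ‖z‖) / 2) with hR'
  have hR'1 : 1 < R' := by
    apply lt_min hR
    linarith
  have hR'le : R' ≤ 1 + (1 - ‖z‖) / 2 := min_le_right _ _
  have hne : ∀ w : ℂ, w ∈ ball (0:ℂ) R' → 1 - (starRingEnd ℂ) z * w ≠ 0 := by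
    intro w hw hcon
    have hw' : ‖w‖ < R' := by simpa [Metric.mem_ball] using hw
    have h1 : (starRingEnd ℂ) z * w = 1 := by linear_combination -hcon
    have h2 : ‖z‖ * ‖w‖ = 1 := by
      rw [← Complex.norm_conj z, ← norm_mul, h1, norm_one]
    nlinarith [norm_nonneg w]
  have hdh : DifferentiableOn ℂ h (ball 0 R') := by
    apply DifferentiableOn.mul (hg.mono (ball_subset_ball (min_le_left _ _)))
    exact DifferentiableOn.inv
      (((differentiable_id.const_mul _).const_sub 1).differentiableOn) hne
  have hmv := mean_value hR'1 hdh
  calc (∫ θ in (0:ℝ)..(2*π),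
        (starRingEnd ℂ) (g (circleMap 0 1 θ)) * (circleMap 0 1 θ / (circleMap 0 1 θ - z)))
      = ∫ θ in (0:ℝ)..(2*π), (starRingEnd ℂ) (h (circleMap 0 1 θ)) := by
        apply intervalIntegral.integral_congr
        intro θ _
        have hc0 : circleMap 0 1 θ ≠ 0 := circleMap_ne_center one_ne_zero
        have hcz : circleMap 0 1 θ - z ≠ 0 := sub_ne_zero.2 (circleMap_ne_mem_ball hz θ)
        simp only [hh]
        conv_rhs => rw [map_mul, map_inv₀, map_sub, map_one, map_mul, Complex.conj_conj,
          my_conj_circleMap]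
        congr 1
        have hd2 : (1:ℂ) - z * (circleMap 0 1 θ)⁻¹ = (circleMap 0 1 θ - z) / circleMap 0 1 θ := by
          field_simp
        rw [hd2, inv_div]
    _ = (starRingEnd ℂ) (∫ θ in (0:ℝ)..(2*π), h (circleMap 0 1 θ)) :=
        my_intervalIntegral_conj _
    _ = (starRingEnd ℂ) (2 * π * h 0) := by rw [hmv]
    _ = 2 * π * (starRingEnd ℂ) (g 0) := by
        simp [hh, Complex.conj_ofReal, map_ofNat]

lemma schwarz_param {R : ℝ} (hR : 1 < R) {g : ℂ → ℂ}
    (hg : DifferentiableOn ℂ g (ball 0 R)) {z : ℂ} (hz : z ∈ ball (0:ℂ) 1) :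
    (∫ θ in (0:ℝ)..(2*π), (((g (circleMap 0 1 θ)).re : ℂ) *
        ((circleMap 0 1 θ + z) / (circleMap 0 1 θ - z))))
      = 2 * π * g z - 2 * π * I * ((g 0).im) := by
  have hmem : ∀ θ : ℝ, circleMap 0 1 θ ∈ ball (0:ℂ) R := by
    intro θ
    rw [mem_ball_zero_iff]
    simpa using hR
  have hgc : Continuous fun θ => g (circleMap 0 1 θ) :=
    hg.continuousOn.comp_continuous (continuous_circleMap 0 1) hmem
  have hKc : Continuous fun θ => circleMap 0 1 θ / (circleMap 0 1 θ - z) := by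
    apply (continuous_circleMap 0 1).div ((continuous_circleMap 0 1).sub continuous_const)
    intro θ; exact sub_ne_zero.2 (circleMap_ne_mem_ball hz θ)
  have i1 : IntervalIntegrable
      (fun θ => circleMap 0 1 θ / (circleMap 0 1 θ - z) * g (circleMap 0 1 θ))
      MeasureTheory.volume 0 (2*π) := (hKc.mul hgc).intervalIntegrable _ _
  have i2 : IntervalIntegrable
      (fun θ => (starRingEnd ℂ) (g (circleMap 0 1 θ)) * (circleMap 0 1 θ / (circleMap 0 1 θ - z)))
      MeasureTheory.volume 0 (2*π) := ((Complex.continuous_conj.comp hgc).mul hKc).intervalIntegrable _ _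
  have i3 : IntervalIntegrable (fun θ => g (circleMap 0 1 θ))
      MeasureTheory.volume 0 (2*π) := hgc.intervalIntegrable _ _
  have i4 : IntervalIntegrable (fun θ => (starRingEnd ℂ) (g (circleMap 0 1 θ)))
      MeasureTheory.volume 0 (2*π) := (Complex.continuous_conj.comp hgc).intervalIntegrable _ _
  have e1 := cauchy_param hR hg hz
  have e2 := conj_kernel hR hg hz
  have e3 := mean_value hR hg
  have e4 : (∫ θ in (0:ℝ)..(2*π), (starRingEnd ℂ) (g (circleMap 0 1 θ)))
      = 2 * π * (starRingEnd ℂ) (g 0) := by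
    rw [my_intervalIntegral_conj, e3]
    simp [Complex.conj_ofReal, map_ofNat]
  have key : (∫ θ in (0:ℝ)..(2*π), (((g (circleMap 0 1 θ)).re : ℂ) *
        ((circleMap 0 1 θ + z) / (circleMap 0 1 θ - z))))
      = ∫ θ in (0:ℝ)..(2*π),
        (circleMap 0 1 θ / (circleMap 0 1 θ - z) * g (circleMap 0 1 θ)
          + (starRingEnd ℂ) (g (circleMap 0 1 θ)) * (circleMap 0 1 θ / (circleMap 0 1 θ - z))
          - 2⁻¹ * g (circleMap 0 1 θ)
          - 2⁻¹ * (starRingEnd ℂ) (g (circleMap 0 1 θ))) := by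
    apply intervalIntegral.integral_congr
    intro θ _
    have hcz : circleMap 0 1 θ - z ≠ 0 := sub_ne_zero.2 (circleMap_ne_mem_ball hz θ)
    have hre : ((g (circleMap 0 1 θ)).re : ℂ)
        = (g (circleMap 0 1 θ) + (starRingEnd ℂ) (g (circleMap 0 1 θ))) / 2 := by
      rw [Complex.add_conj]
      push_cast
      ring
    simp only [hre]
    field_simp
    ring
  rw [key, intervalIntegral.integral_sub ((i1.add i2).sub (i3.const_mul 2⁻¹)) (i4.const_mul 2⁻¹),
    intervalIntegral.integral_sub (i1.add i2) (i3.const_mul 2⁻¹),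
    intervalIntegral.integral_add i1 i2,
    intervalIntegral.integral_const_mul, intervalIntegral.integral_const_mul,
    e1, e2, e3, e4]
  have hsc : g 0 - (starRingEnd ℂ) (g 0) = 2 * ((g 0).im : ℂ) * I := by
    rw [Complex.sub_conj]
    push_cast
    ring
  linear_combination (-(↑π : ℂ)) * hsc

lemma key_lemma (f : ℂ → ℂ) (hf : ∀ z ∈ ball (0:ℂ) 1, DifferentiableAt ℂ f z)
    (hf0 : (f 0).im = 0)
    (hbv : ∀ γ : ℝ → ℝ, ContDiff ℝ (⊤ : ℕ∞) γ → Function.Periodic γ (2 * π) →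
      Tendsto (fun r : ℝ => ∫ θ in (0:ℝ)..(2 * π),
          (f (r * Complex.exp (Complex.I * θ))).re * γ θ)
        (nhdsWithin (1:ℝ) (Iio 1)) (nhds 0)) :
    ∀ z ∈ ball (0:ℂ) 1, f z = 0 := by
  intro z hz
  set K : ℝ → ℂ := fun θ => (circleMap 0 1 θ + z) / (circleMap 0 1 θ - z) with hK
  have hKsmooth : ContDiff ℝ (⊤ : ℕ∞) K := by
    have hc : ContDiff ℝ (⊤ : ℕ∞) (circleMap 0 1) := by
      have h1 : ContDiff ℝ (⊤ : ℕ∞) (fun θ : ℝ => Complex.exp (↑θ * I)) :=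
        (Complex.contDiff_exp (𝕜 := ℝ)).comp (Complex.ofRealCLM.contDiff.mul contDiff_const)
      have h2 : circleMap 0 1 = fun θ : ℝ => Complex.exp (↑θ * I) := by
        funext θ
        simp [circleMap]
      rw [h2]
      exact h1
    rw [hK]
    simp only [div_eq_mul_inv]
    exact (hc.add contDiff_const).mul ((hc.sub contDiff_const).inv
      (fun θ => sub_ne_zero.2 (circleMap_ne_mem_ball hz θ)))
  set γ₁ : ℝ → ℝ := fun θ => (K θ).re with hγ₁
  set γ₂ : ℝ → ℝ := fun θ => (K θ).im with hγ₂
  have hγ₁s : ContDiff ℝ (⊤ : ℕ∞) γ₁ := Complex.reCLM.contDiff.comp hKsmooth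
  have hγ₂s : ContDiff ℝ (⊤ : ℕ∞) γ₂ := Complex.imCLM.contDiff.comp hKsmooth
  have hper : ∀ θ, K (θ + 2*π) = K θ := by
    intro θ
    simp only [hK, periodic_circleMap 0 1 θ]
  have hγ₁p : Function.Periodic γ₁ (2*π) := fun θ => by simp only [hγ₁, hper θ]
  have hγ₂p : Function.Periodic γ₂ (2*π) := fun θ => by simp only [hγ₂, hper θ]
  have h1 := hbv γ₁ hγ₁s hγ₁p
  have h2 := hbv γ₂ hγ₂s hγ₂p
  set F : ℝ → ℂ := fun r =>
    ((∫ θ in (0:ℝ)..(2*π), (f (r * Complex.exp (Complex.I * θ))).re * γ₁ θ : ℝ) : ℂ)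
    + ((∫ θ in (0:ℝ)..(2*π), (f (r * Complex.exp (Complex.I * θ))).re * γ₂ θ : ℝ) : ℂ) * I
    with hF
  have hF0 : Tendsto F (nhdsWithin 1 (Iio 1)) (nhds 0) := by
    have t1 := (Complex.continuous_ofReal.tendsto 0).comp h1
    have t2 := (Complex.continuous_ofReal.tendsto 0).comp h2
    have := t1.add (t2.mul_const I)
    simpa using this
  -- identification with 2π f(rz)
  have heq : ∀ᶠ r in nhdsWithin (1:ℝ) (Iio 1), F r = 2 * π * f (↑r * z) := by
    filter_upwards [Ioo_mem_nhdsLT_of_mem (show (1:ℝ) ∈ Ioc 0 1 from ⟨zero_lt_one, le_refl 1⟩)]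
      with r hr
    have hr0 : (0:ℝ) < r := hr.1
    have hr1 : r < 1 := hr.2
    set g : ℂ → ℂ := fun w => f (↑r * w) with hg
    have hR1 : 1 < r⁻¹ := (one_lt_inv₀ hr0).mpr hr1
    have hgd : DifferentiableOn ℂ g (ball 0 r⁻¹) := by
      intro w hw
      have hmem : (↑r * w : ℂ) ∈ ball (0:ℂ) 1 := by
        rw [mem_ball_zero_iff] at hw ⊢
        rw [norm_mul, Complex.norm_real, Real.norm_eq_abs, abs_of_pos hr0]
        calc r * ‖w‖ < r * r⁻¹ := by
              apply mul_lt_mul_of_pos_left hw hr0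
          _ = 1 := mul_inv_cancel₀ (ne_of_gt hr0)
      exact ((hf _ hmem).comp w ((differentiableAt_id.const_mul _))).differentiableWithinAt
    have hs := schwarz_param hR1 hgd hz
    have hg0 : g 0 = f 0 := by simp [hg]
    have hgz : g z = f (↑r * z) := rfl
    -- continuity of integrands
    have hfc : Continuous fun θ : ℝ => f ((r:ℂ) * Complex.exp (Complex.I * ↑θ)) := by
      have hcont : ContinuousOn f (ball (0:ℂ) 1) := fun w hw =>
        (hf w hw).continuousAt.continuousWithinAt
      apply hcont.comp_continuous
      · exact continuous_const.mul (Complex.continuous_exp.comp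
          (continuous_const.mul Complex.continuous_ofReal))
      · intro θ
        rw [mem_ball_zero_iff, norm_mul, Complex.norm_real, Real.norm_eq_abs, abs_of_pos hr0,
          Complex.norm_exp]
        simp [abs_of_pos hr0, hr1]
    have hγ₁c : Continuous γ₁ := hγ₁s.continuous
    have hγ₂c : Continuous γ₂ := hγ₂s.continuous
    have j1 : IntervalIntegrable
        (fun θ : ℝ => ((f ((r:ℂ) * Complex.exp (Complex.I * ↑θ))).re : ℂ) * ((γ₁ θ : ℝ) : ℂ))
        MeasureTheory.volume 0 (2*π) :=
      ((Complex.continuous_ofReal.comp (Complex.continuous_re.comp hfc)).mul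
        (Complex.continuous_ofReal.comp hγ₁c)).intervalIntegrable _ _
    have j2 : IntervalIntegrable
        (fun θ : ℝ => ((f ((r:ℂ) * Complex.exp (Complex.I * ↑θ))).re : ℂ) * ((γ₂ θ : ℝ) : ℂ) * I)
        MeasureTheory.volume 0 (2*π) :=
      (((Complex.continuous_ofReal.comp (Complex.continuous_re.comp hfc)).mul
        (Complex.continuous_ofReal.comp hγ₂c)).mul continuous_const).intervalIntegrable _ _
    have hFr : F r = ∫ θ in (0:ℝ)..(2*π),
        ((f ((r:ℂ) * Complex.exp (Complex.I * ↑θ))).re : ℂ) * K θ := by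
      simp only [hF]
      rw [← intervalIntegral.integral_ofReal (f := fun θ =>
        (f ((r:ℂ) * Complex.exp (Complex.I * ↑θ))).re * γ₁ θ)]
      rw [← intervalIntegral.integral_ofReal (f := fun θ =>
        (f ((r:ℂ) * Complex.exp (Complex.I * ↑θ))).re * γ₂ θ)]
      push_cast
      rw [← intervalIntegral.integral_mul_const, ← intervalIntegral.integral_add j1 j2]
      apply intervalIntegral.integral_congr
      intro θ _
      have := Complex.re_add_im (K θ)
      calc ((f ((r:ℂ) * Complex.exp (Complex.I * ↑θ))).re : ℂ) * ((γ₁ θ : ℝ) : ℂ)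
            + ((f ((r:ℂ) * Complex.exp (Complex.I * ↑θ))).re : ℂ) * ((γ₂ θ : ℝ) : ℂ) * I
          = ((f ((r:ℂ) * Complex.exp (Complex.I * ↑θ))).re : ℂ)
            * (((K θ).re : ℂ) + ((K θ).im : ℂ) * I) := by ring
        _ = _ := by rw [this]
    have hcirc : ∀ θ : ℝ, (r:ℂ) * circleMap 0 1 θ = (r:ℂ) * Complex.exp (Complex.I * ↑θ) := by
      intro θ
      simp [circleMap, mul_comm]
    rw [hFr]
    rw [show (∫ θ in (0:ℝ)..(2*π),
        ((f ((r:ℂ) * Complex.exp (Complex.I * ↑θ))).re : ℂ) * K θ)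
      = ∫ θ in (0:ℝ)..(2*π), ((g (circleMap 0 1 θ)).re : ℂ) * K θ by
        apply intervalIntegral.integral_congr
        intro θ _
        rw [hg]
        simp only []
        rw [hcirc θ]]
    simp only [hK]
    rw [hs, hg0, hgz, hf0]
    push_cast
    ring
  -- limit of 2π f (r z)
  have hG : Tendsto (fun r : ℝ => 2 * (π:ℂ) * f (↑r * z)) (nhdsWithin (1:ℝ) (Iio 1))
      (nhds (2 * π * f z)) := by
    have hmulz : Tendsto (fun r : ℝ => ((r:ℂ) * z)) (nhds 1) (nhds z) := by
      have hcontm : Continuous (fun r : ℝ => ((r:ℂ) * z)) :=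
        Complex.continuous_ofReal.mul continuous_const
      have := hcontm.tendsto (1:ℝ)
      simpa using this
    have := (((hf z hz).continuousAt.tendsto).comp hmulz).const_mul (2 * (π:ℂ))
    exact this.mono_left nhdsWithin_le_nhds
  have h0 : (2 : ℂ) * π * f z = 0 := tendsto_nhds_unique hG (hF0.congr' heq)
  have hpi : (2 : ℂ) * (π : ℂ) ≠ 0 := by
    simp [Real.pi_ne_zero]
  exact (mul_eq_zero.mp h0).resolve_left hpi

/-- Uniqueness for the bicomplex Schwarz problem with distributional boundary condition
(homogeneous form): if `conj ∘ w⁺` and `w⁻` are holomorphic on the unit disk, the imaginary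
parts of `w⁺` and `w⁻` vanish at the origin, and the real parts of `w⁺` and `w⁻` have
distributional boundary value `0`, then `w⁺` and `w⁻` (hence the bicomplex function
`w = p⁺w⁺ + p⁻w⁻`) vanish identically on the disk. -/
theorem bicomplex_schwarz_bvp_distributional_uniqueness (wp wm : ℂ → ℂ)
    (hwp : ∀ z ∈ unitDisk, DifferentiableAt ℂ (fun w => (starRingEnd ℂ) (wp w)) z)
    (hwm : ∀ z ∈ unitDisk, DifferentiableAt ℂ wm z)
    (hwp0 : (wp 0).im = 0) (hwm0 : (wm 0).im = 0)
    (hbvp : ∀ γ : ℝ → ℝ, ContDiff ℝ (⊤ : ℕ∞) γ → Function.Periodic γ (2 * Real.pi) →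
      Tendsto (fun r : ℝ => ∫ θ in (0 : ℝ)..(2 * Real.pi),
          (wp (r * Complex.exp (Complex.I * θ))).re * γ θ)
        (nhdsWithin (1 : ℝ) (Set.Iio 1)) (nhds 0))
    (hbvm : ∀ γ : ℝ → ℝ, ContDiff ℝ (⊤ : ℕ∞) γ → Function.Periodic γ (2 * Real.pi) →
      Tendsto (fun r : ℝ => ∫ θ in (0 : ℝ)..(2 * Real.pi),
          (wm (r * Complex.exp (Complex.I * θ))).re * γ θ)
        (nhdsWithin (1 : ℝ) (Set.Iio 1)) (nhds 0)) :
    ∀ z ∈ unitDisk, wp z = 0 ∧ wm z = 0 := by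
  intro z hz
  constructor
  · have hbv' : ∀ γ : ℝ → ℝ, ContDiff ℝ (⊤ : ℕ∞) γ → Function.Periodic γ (2 * π) →
        Tendsto (fun r : ℝ => ∫ θ in (0 : ℝ)..(2 * π),
            ((starRingEnd ℂ) (wp (r * Complex.exp (Complex.I * θ)))).re * γ θ)
          (nhdsWithin (1 : ℝ) (Iio 1)) (nhds 0) := by
      intro γ h1 h2
      simpa [Complex.conj_re] using hbvp γ h1 h2
    have h := key_lemma (fun w => (starRingEnd ℂ) (wp w)) hwp (by simp [hwp0]) hbv' z hz
    simpa using h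
  · exact key_lemma wm hwm hwm0 hbvm z hz
end
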